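/- arXiv:1405.1023 — 2 statements merged into one kernel-verified Lean document; each statement's English description precedes it below -/
import Mathlib

section
/- Let a, b, ã, b̃, γ, γ̃, u₁, u₂ be elements of a field with u₁u₂γγ̃ ≠ 0 and suppose ãb − ab̃ = u₁u₂γγ̃. Then ((a(ã+2b̃)+bb̃)/(u₁u₂γγ̃) + 1)² = ((a+b)²/(u₁u₂γ²)) · ((ã+b̃)²/(u₁u₂γ̃²)). -/
/-- Relation (4): `[t(d_k)+1]² = t(j_k)·t(j_{k+1})`. -/
theorem stmt_3 {K : Type*} [Field K] (a b a2 b2 γ γ2 u₁ u₂ : K)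
    (h : u₁ * u₂ * γ * γ2 ≠ 0) (huni : a2 * b - a * b2 = u₁ * u₂ * γ * γ2) :
    ((a * (a2 + 2 * b2) + b * b2) / (u₁ * u₂ * γ * γ2) + 1) ^ 2 =
      (a + b) ^ 2 / (u₁ * u₂ * γ ^ 2) * ((a2 + b2) ^ 2 / (u₁ * u₂ * γ2 ^ 2)) := by
  have hu₁ : u₁ ≠ 0 := by intro h'; apply h; rw [h']; ring
  have hu₂ : u₂ ≠ 0 := by intro h'; apply h; rw [h']; ring
  have hγ : γ ≠ 0 := by intro h'; apply h; rw [h']; ring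
  have hγ2 : γ2 ≠ 0 := by intro h'; apply h; rw [h']; ring
  have key : (a * (a2 + 2 * b2) + b * b2) / (u₁ * u₂ * γ * γ2) + 1
      = (a + b) * (a2 + b2) / (u₁ * u₂ * γ * γ2) := by
    rw [div_add_one h, ← huni]; ring_nf
  rw [key]
  field_simp
end

section
/- Let t : ℤ² → K be a map into a field K such that for all u, v ∈ ℤ, t(u,v+1)·t(u+1,v) − t(u+1,v+1)·t(u,v) = 1 (SL₂-tiling condition), and such that t is nowhere zero. Fix u ∈ ℤ and suppose there exists v with t(u+1,v) ≠ 0. Then there exists a unique α ∈ K such that t(u,v) + t(u+2,v) = α·t(u+1,v) for all v ∈ ℤ, provided t(u+1,v) ≠ 0 for all v. -/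
/-!
Subtracting the determinant conditions of the blocks at columns `u` and `u + 1` shows that the
2×2 determinant of the vectors `(C₀ + C₂)(v), (C₀ + C₂)(v + 1)` and `C₁(v), C₁(v + 1)` vanishes.
Hence the ratio `(C₀ + C₂)(v) / C₁(v)` is invariant under `v ↦ v + 1`, i.e. constant in `v`.
-/

def IsSL2Tiling {K : Type*} [CommRing K] (t : ℤ → ℤ → K) : Prop :=
  ∀ u v : ℤ, t u (v + 1) * t (u + 1) v - t (u + 1) (v + 1) * t u v = 1

theorem IsSL2Tiling.add_mul_succ_eq {K : Type*} [CommRing K] {t : ℤ → ℤ → K}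
    (ht : IsSL2Tiling t) (u v : ℤ) :
    (t u v + t (u + 2) v) * t (u + 1) (v + 1) =
      (t u (v + 1) + t (u + 2) (v + 1)) * t (u + 1) v := by
  have h := ht (u + 1) v
  rw [show u + 1 + 1 = u + 2 by ring] at h
  linear_combination h - ht u v

theorem existsUnique_forall_eq_mul_of_mul_succ_eq {K : Type*} [Field K] {f g : ℤ → K}
    (hg : ∀ v, g v ≠ 0) (h : ∀ v, f v * g (v + 1) = f (v + 1) * g v) :
    ∃! α : K, ∀ v, f v = α * g v := by
  have hper : Function.Periodic (fun v => f v / g v) 1 := fun v =>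
    (div_eq_div_iff (hg _) (hg _)).mpr (h v).symm
  refine ⟨f 0 / g 0, fun v => ?_, fun β hβ => ?_⟩
  · rw [← div_eq_iff (hg v), ← hper.int_mul_eq v, mul_one, Int.cast_id]
  · rw [hβ 0, mul_div_cancel_right₀ _ (hg 0)]

/-- Linearization coefficient of a column of an SL₂-tiling: if `t` is an
SL₂-tiling which is nowhere zero, then for each `u` there is a unique `α`
with `t(u,v) + t(u+2,v) = α·t(u+1,v)` for all `v`. -/
theorem stmt_5 {K : Type*} [Field K] (t : ℤ → ℤ → K)
    (hSL : ∀ u v : ℤ, t u (v + 1) * t (u + 1) v - t (u + 1) (v + 1) * t u v = 1)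
    (hnz : ∀ u v : ℤ, t u v ≠ 0) (u : ℤ) :
    ∃! α : K, ∀ v : ℤ, t u v + t (u + 2) v = α * t (u + 1) v :=
  existsUnique_forall_eq_mul_of_mul_succ_eq (hnz (u + 1))
    (IsSL2Tiling.add_mul_succ_eq hSL u)
end
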